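/- arXiv:2206.08570 — 4 statements merged into one kernel-verified Lean document; each statement's English description precedes it below -/
import Mathlib

section
/- For i = 1,…,N, let f_i : ℝ → ℝ be twice continuously differentiable with h̲ ≤ f_i''(s) ≤ h̄ for all s ∈ ℝ, where 0 < h̲ ≤ h̄, let F : ℝ^N → ℝ^N be the stacked gradient map F(z) = (f_1'(z_1), …, f_N'(z_N)), and let y* be the unique minimizer of f = Σ_{i=1}^N f_i. Let L ∈ ℝ^{N×N} satisfy L𝟙 = 0 and 𝟙ᵀL = 0, and suppose λ₂‖x‖² ≤ xᵀLx for some λ₂ > 0 and all x ∈ ℝ^N with 𝟙ᵀx = 0. Let α, β > 0. If (z*, v*) ∈ ℝ^N × ℝ^N satisfies α·F(z*) + β·L z* + L v* = 0 and L z* = 0, then z* = y*·𝟙. -/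
/-! Coercivity of `L` off the consensus direction forces `ker L = ℝ𝟙`, so `z* = c𝟙`. Summing the
equilibrium equation and using `𝟙ᵀL = 0` gives `∑ fᵢ'(c) = 0`; the minimizer `y*` is also a zero
of `∑ fᵢ'`, which is strictly increasing since every `fᵢ'' > 0`, hence `c = y*`. -/

open Finset Matrix

section Consensus

variable {ι : Type*} [Fintype ι]

theorem Matrix.sum_mulVec_eq_zero_of_vecMul_one_eq_zero {L : Matrix ι ι ℝ}
    (h1L : vecMul (fun _ => (1 : ℝ)) L = 0) (v : ι → ℝ) : ∑ i, (L *ᵥ v) i = 0 := by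
  simpa [h1L, dotProduct] using dotProduct_mulVec (fun _ => (1 : ℝ)) L v

theorem Matrix.exists_eq_const_of_mulVec_eq_zero {L : Matrix ι ι ℝ}
    (hL1 : L *ᵥ (fun _ => (1 : ℝ)) = 0) {lam2 : ℝ} (hlam2 : 0 < lam2)
    (hquad : ∀ x : ι → ℝ, ∑ i, x i = 0 → lam2 * ∑ i, x i ^ 2 ≤ x ⬝ᵥ (L *ᵥ x))
    {z : ι → ℝ} (hz : L *ᵥ z = 0) : ∃ c : ℝ, z = fun _ => c := by
  cases isEmpty_or_nonempty ι with
  | inl _ => exact ⟨0, Subsingleton.elim _ _⟩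
  | inr _ =>
  set c := (∑ i, z i) / Fintype.card ι
  set w := z - c • (fun _ => (1 : ℝ))
  have hw : ∑ i, w i = 0 := by
    simp only [w, Pi.sub_apply, Pi.smul_apply, smul_eq_mul, mul_one, sum_sub_distrib,
      sum_const, card_univ, nsmul_eq_mul, c]
    field_simp
    ring
  have hLw : L *ᵥ w = 0 := by simp [w, mulVec_sub, mulVec_smul, hz, hL1]
  have hw2 : ∑ i, w i ^ 2 = 0 := by
    have := hquad w hw
    rw [hLw, dotProduct_zero] at this
    exact le_antisymm (nonpos_of_mul_nonpos_right this hlam2) (by positivity)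
  refine ⟨c, funext fun i => ?_⟩
  have hwi := (sum_eq_zero_iff_of_nonneg fun i _ => sq_nonneg (w i)).1 hw2 i (mem_univ i)
  have : z i - c = 0 := by simpa [w] using hwi
  linarith

end Consensus

theorem strictMono_sum {ι : Type*} [Fintype ι] [Nonempty ι] {g : ι → ℝ → ℝ}
    (hg : ∀ i, StrictMono (g i)) : StrictMono fun s => ∑ i, g i s :=
  fun _ _ hab => sum_lt_sum_of_nonempty univ_nonempty fun i _ => hg i hab

theorem stmt_3_general (N : ℕ) (f : Fin N → ℝ → ℝ) (hl hu : ℝ)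
    (hl_pos : 0 < hl)
    (hsmooth : ∀ i, ContDiff ℝ 2 (f i))
    (hbound : ∀ i s, hl ≤ deriv (deriv (f i)) s ∧ deriv (deriv (f i)) s ≤ hu)
    (ystar : ℝ) (hy : ∀ s : ℝ, ∑ i, f i ystar ≤ ∑ i, f i s)
    (L : Matrix (Fin N) (Fin N) ℝ)
    (hL1 : L *ᵥ (fun _ => (1 : ℝ)) = 0)
    (h1L : Matrix.vecMul (fun _ => (1 : ℝ)) L = 0)
    (lam2 : ℝ) (hlam2 : 0 < lam2)
    (hquad : ∀ x : Fin N → ℝ, ∑ i, x i = 0 →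
      lam2 * ∑ i, (x i) ^ 2 ≤ x ⬝ᵥ (L *ᵥ x))
    (α β : ℝ) (hα : 0 < α)
    (zstar vstar : Fin N → ℝ)
    (heq : ∀ i, α * deriv (f i) (zstar i) + β * (L *ᵥ zstar) i + (L *ᵥ vstar) i = 0)
    (hz : L *ᵥ zstar = 0) :
    zstar = fun _ => ystar := by
  obtain ⟨c, rfl⟩ := exists_eq_const_of_mulVec_eq_zero hL1 hlam2 hquad hz
  cases isEmpty_or_nonempty (Fin N) with
  | inl _ => exact Subsingleton.elim _ _
  | inr _ =>
  have hc : ∑ i, deriv (f i) c = 0 := by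
    have hsum := sum_eq_zero (s := univ) fun i _ => heq i
    rw [sum_add_distrib, sum_add_distrib, ← mul_sum, hz,
      sum_mulVec_eq_zero_of_vecMul_one_eq_zero h1L] at hsum
    simpa [hα.ne'] using hsum
  have hystar : ∑ i, deriv (f i) ystar = 0 := by
    rw [← deriv_fun_sum fun i _ => ((hsmooth i).differentiable (by norm_num)).differentiableAt]
    exact IsLocalMin.deriv_eq_zero (Filter.Eventually.of_forall hy)
  have hmono : StrictMono fun s => ∑ i, deriv (f i) s :=
    strictMono_sum fun i => strictMono_of_deriv_pos fun s => hl_pos.trans_le (hbound i s).1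
  rw [hmono.injective (hc.trans hystar.symm)]

/-- Any equilibrium `(z*, v*)` of the optimal signal generator, i.e.
`α F(z*) + β L z* + L v* = 0` and `L z* = 0`, satisfies `z* = y* 𝟙`, where `y*` is the
unique minimizer of `f = ∑ i, f i`, `L 𝟙 = 0`, `𝟙ᵀ L = 0`, and `λ₂‖x‖² ≤ xᵀLx` on
`{x : 𝟙ᵀx = 0}` with `λ₂ > 0`. -/
theorem stmt_3 (N : ℕ) (f : Fin N → ℝ → ℝ) (hl hu : ℝ)
    (hl_pos : 0 < hl) (hlu : hl ≤ hu)
    (hsmooth : ∀ i, ContDiff ℝ 2 (f i))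
    (hbound : ∀ i s, hl ≤ deriv (deriv (f i)) s ∧ deriv (deriv (f i)) s ≤ hu)
    (ystar : ℝ) (hy : ∀ s : ℝ, ∑ i, f i ystar ≤ ∑ i, f i s)
    (L : Matrix (Fin N) (Fin N) ℝ)
    (hL1 : L *ᵥ (fun _ => (1 : ℝ)) = 0)
    (h1L : Matrix.vecMul (fun _ => (1 : ℝ)) L = 0)
    (lam2 : ℝ) (hlam2 : 0 < lam2)
    (hquad : ∀ x : Fin N → ℝ, ∑ i, x i = 0 →
      lam2 * ∑ i, (x i) ^ 2 ≤ x ⬝ᵥ (L *ᵥ x))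
    (α β : ℝ) (hα : 0 < α) (hβ : 0 < β)
    (zstar vstar : Fin N → ℝ)
    (heq : ∀ i, α * deriv (f i) (zstar i) + β * (L *ᵥ zstar) i + (L *ᵥ vstar) i = 0)
    (hz : L *ᵥ zstar = 0) :
    zstar = fun _ => ystar :=
  stmt_3_general N f hl hu hl_pos hsmooth hbound ystar hy L hL1 h1L lam2 hlam2 hquad α β hα zstar
    vstar heq hz
end

section
/- Let 0 < h̲ ≤ h̄, 0 < λ₂ ≤ λ_N, and η > 0 be real constants. Suppose α ≥ max{1, 2η/min{h̲, λ₂}, 6h̄²/(h̲λ₂)} and β ≥ max{1, 7α²λ_N²/λ₂²}. Then for all real numbers p, q, r with 0 ≤ r ≤ p and q ≥ 0: −α h̲ p² − β λ₂ r² + α λ_N r² + λ_N r q − (2λ₂/α²) q² + (2λ_N/α) r q + (2h̄/α) q p ≤ −2η(p²/2 + q²/α³). -/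
/-!
Clear the maxima in the gain conditions, spend half of `α h̲ p²` on the `η p²` term and half of
`(2λ₂/α²) q²` on the `η q²/α³` term, and absorb each of the two cross terms in `q` by AM-GM
against a quarter `λ₂/(2α²) q²` of the `q²` coefficient.  What is left is a nonpositive multiple
of `p²` (this is where `6h̄² ≤ α h̲ λ₂` enters) and a nonpositive multiple of `r²` (where
`7α²λ_N² ≤ βλ₂²` enters).
-/

theorem mul_le_half_mul_sq_add_sq_div (a b : ℝ) {c : ℝ} (hc : 0 < c) :
    a * b ≤ c / 2 * a ^ 2 + b ^ 2 / (2 * c) := by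
  have hsq : 0 ≤ (c * a - b) ^ 2 / (2 * c) := by positivity
  calc a * b = c / 2 * a ^ 2 + b ^ 2 / (2 * c) - (c * a - b) ^ 2 / (2 * c) := by
        field_simp; ring
    _ ≤ c / 2 * a ^ 2 + b ^ 2 / (2 * c) := by linarith

section DecayEstimate

variable {hl hu lam2 lamN eta α β : ℝ}

theorem cross_rq_le (hlam2 : 0 < lam2) (hα : α ≠ 0) (r q : ℝ) :
    lamN * r * q + 2 * lamN / α * r * q
      ≤ lam2 / (2 * α ^ 2) * q ^ 2 + (α + 2) ^ 2 * lamN ^ 2 / (2 * lam2) * r ^ 2 := by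
  calc lamN * r * q + 2 * lamN / α * r * q = q * (lamN * (1 + 2 / α) * r) := by ring
    _ ≤ lam2 / α ^ 2 / 2 * q ^ 2 + (lamN * (1 + 2 / α) * r) ^ 2 / (2 * (lam2 / α ^ 2)) :=
        mul_le_half_mul_sq_add_sq_div _ _ (by positivity)
    _ = lam2 / (2 * α ^ 2) * q ^ 2 + (α + 2) ^ 2 * lamN ^ 2 / (2 * lam2) * r ^ 2 := by
        field_simp

theorem cross_qp_le (hlam2 : 0 < lam2) (hα : α ≠ 0) (q p : ℝ) :
    2 * hu / α * q * p ≤ lam2 / (2 * α ^ 2) * q ^ 2 + 2 * hu ^ 2 / lam2 * p ^ 2 := by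
  calc 2 * hu / α * q * p = q * (2 * hu / α * p) := by ring
    _ ≤ lam2 / α ^ 2 / 2 * q ^ 2 + (2 * hu / α * p) ^ 2 / (2 * (lam2 / α ^ 2)) :=
        mul_le_half_mul_sq_add_sq_div _ _ (by positivity)
    _ = lam2 / (2 * α ^ 2) * q ^ 2 + 2 * hu ^ 2 / lam2 * p ^ 2 := by
        field_simp

theorem r_sq_coeff_le (hlam2 : 0 < lam2) (hlamN : lam2 ≤ lamN) (hα : 1 ≤ α)
    (hβ : 7 * α ^ 2 * lamN ^ 2 ≤ β * lam2 ^ 2) :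
    α * lamN + (α + 2) ^ 2 * lamN ^ 2 / (2 * lam2) ≤ β * lam2 := by
  have hlamN0 : 0 < lamN := hlam2.trans_le hlamN
  have hlin : 2 * α * lamN * lam2 ≤ 2 * α * lamN * (α * lamN) :=
    mul_le_mul_of_nonneg_left (by nlinarith) (by positivity)
  have hsq : (α + 2) ^ 2 ≤ 9 * α ^ 2 := by nlinarith
  have hdiv : (α + 2) ^ 2 * lamN ^ 2 / (2 * lam2) ≤ β * lam2 - α * lamN := by
    rw [div_le_iff₀ (by positivity)]
    nlinarith [mul_le_mul_of_nonneg_right hsq (sq_nonneg lamN)]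
  linarith

theorem decay_estimate (hlam2 : 0 < lam2) (hlamN : lam2 ≤ lamN) (hα : 1 ≤ α)
    (hηhl : 2 * eta ≤ α * hl) (hηlam : 2 * eta ≤ α * lam2) (hhu : 6 * hu ^ 2 ≤ α * (hl * lam2))
    (hβ : 7 * α ^ 2 * lamN ^ 2 ≤ β * lam2 ^ 2) (p q r : ℝ) :
    -α * hl * p ^ 2 - β * lam2 * r ^ 2 + α * lamN * r ^ 2 + lamN * r * q
      - (2 * lam2 / α ^ 2) * q ^ 2 + (2 * lamN / α) * r * q + (2 * hu / α) * q * p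
      ≤ -2 * eta * (p ^ 2 / 2 + q ^ 2 / α ^ 3) := by
  have hα0 : 0 < α := by positivity
  have hp : eta * p ^ 2 ≤ α * hl / 2 * p ^ 2 :=
    mul_le_mul_of_nonneg_right (by linarith) (sq_nonneg p)
  have hq : 2 * eta * (q ^ 2 / α ^ 3) ≤ lam2 / α ^ 2 * q ^ 2 := by
    calc 2 * eta * (q ^ 2 / α ^ 3) ≤ α * lam2 * (q ^ 2 / α ^ 3) :=
          mul_le_mul_of_nonneg_right hηlam (by positivity)
      _ = lam2 / α ^ 2 * q ^ 2 := by field_simp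
  have hp_coeff : 2 * hu ^ 2 / lam2 * p ^ 2 ≤ α * hl / 2 * p ^ 2 := by
    refine mul_le_mul_of_nonneg_right ?_ (sq_nonneg p)
    rw [div_le_iff₀ hlam2]
    nlinarith [sq_nonneg hu]
  have hr_coeff := mul_le_mul_of_nonneg_right (r_sq_coeff_le hlam2 hlamN hα hβ) (sq_nonneg r)
  linear_combination hp + hq + hp_coeff + hr_coeff + cross_rq_le (lamN := lamN) hlam2 hα0.ne' r q
    + cross_qp_le (hu := hu) hlam2 hα0.ne' q p

end DecayEstimate

theorem stmt_4_general (hl hu lam2 lamN eta α β p q r : ℝ)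
    (h1 : 0 < hl) (h3 : 0 < lam2) (h4 : lam2 ≤ lamN)
    (hα : α ≥ max 1 (max (2 * eta / min hl lam2) (6 * hu ^ 2 / (hl * lam2))))
    (hβ : β ≥ max 1 (7 * α ^ 2 * lamN ^ 2 / lam2 ^ 2)) :
    -α * hl * p ^ 2 - β * lam2 * r ^ 2 + α * lamN * r ^ 2 + lamN * r * q
      - (2 * lam2 / α ^ 2) * q ^ 2 + (2 * lamN / α) * r * q + (2 * hu / α) * q * p
      ≤ -2 * eta * (p ^ 2 / 2 + q ^ 2 / α ^ 3) := by
  rw [ge_iff_le, max_le_iff, max_le_iff, div_le_iff₀ (lt_min h1 h3),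
    div_le_iff₀ (mul_pos h1 h3)] at hα
  obtain ⟨hα1, hη, hhu⟩ := hα
  have hβ' := (max_le_iff.mp hβ).2
  rw [div_le_iff₀ (by positivity)] at hβ'
  have hα0 : 0 ≤ α := by linarith
  refine decay_estimate h3 h4 hα1 ?_ ?_ hhu hβ' p q r
  · exact hη.trans (mul_le_mul_of_nonneg_left (min_le_left _ _) hα0)
  · exact hη.trans (mul_le_mul_of_nonneg_left (min_le_right _ _) hα0)

/-- The key algebraic inequality behind the Lyapunov decay estimate of the
optimal signal generator: with `α ≥ max{1, 2η/min{h̲,λ₂}, 6h̄²/(h̲λ₂)}` and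
`β ≥ max{1, 7α²λ_N²/λ₂²}`, for all `0 ≤ r ≤ p` and `q ≥ 0`,
`−αh̲p² − βλ₂r² + αλ_Nr² + λ_Nrq − (2λ₂/α²)q² + (2λ_N/α)rq + (2h̄/α)qp ≤ −2η(p²/2 + q²/α³)`. -/
theorem stmt_4 (hl hu lam2 lamN eta α β p q r : ℝ)
    (h1 : 0 < hl) (h2 : hl ≤ hu) (h3 : 0 < lam2) (h4 : lam2 ≤ lamN) (h5 : 0 < eta)
    (hα : α ≥ max 1 (max (2 * eta / min hl lam2) (6 * hu ^ 2 / (hl * lam2))))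
    (hβ : β ≥ max 1 (7 * α ^ 2 * lamN ^ 2 / lam2 ^ 2))
    (hr : 0 ≤ r) (hrp : r ≤ p) (hq : 0 ≤ q) :
    -α * hl * p ^ 2 - β * lam2 * r ^ 2 + α * lamN * r ^ 2 + lamN * r * q
      - (2 * lam2 / α ^ 2) * q ^ 2 + (2 * lamN / α) * r * q + (2 * hu / α) * q * p
      ≤ -2 * eta * (p ^ 2 / 2 + q ^ 2 / α ^ 3) :=
  stmt_4_general hl hu lam2 lamN eta α β p q r h1 h3 h4 hα hβ
end

section
/- Let γ > 0, ĉ > 0, c₁ > 0, and let τ > 0 be the unique positive solution of 2ĉ·s = c₁·e^{−γs}. Let t* ≥ 0 and let g : [t*, ∞) → ℝ be differentiable with g(t*) = 0 and |g'(t)| ≤ 2ĉ·e^{−γt} for all t ≥ t*. Then |g(t)| < c₁·e^{−γt} for all t ∈ (t*, t* + τ). In particular, the first time after t* at which |g(t)| reaches the threshold c₁·e^{−γt} is at least t* + τ. -/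
/-- Zeno-freeness with exponential threshold: if `τ > 0` is the unique
positive solution of `2ĉs = c₁e^{−γs}`, the error `g` is reset to `0` at `t*` and
`|g'(t)| ≤ 2ĉe^{−γt}` afterwards, then `|g(t)| < c₁e^{−γt}` on `(t*, t* + τ)`; in
particular the threshold `c₁e^{−γt}` cannot be reached before `t* + τ`. -/
theorem stmt_15 (γ chat c1 τ tstar : ℝ)
    (hγ : 0 < γ) (hchat : 0 < chat) (hc1 : 0 < c1)
    (hτ : 0 < τ) (hτeq : 2 * chat * τ = c1 * Real.exp (-γ * τ))
    (ht : 0 ≤ tstar)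
    (g g' : ℝ → ℝ) (hg0 : g tstar = 0)
    (hg : ∀ t, tstar ≤ t → HasDerivAt g (g' t) t)
    (hg' : ∀ t, tstar ≤ t → |g' t| ≤ 2 * chat * Real.exp (-γ * t)) :
    (∀ t, tstar < t → t < tstar + τ → |g t| < c1 * Real.exp (-γ * t)) ∧
    (∀ T, tstar < T → c1 * Real.exp (-γ * T) ≤ |g T| → tstar + τ ≤ T) := by
  have key : ∀ t, tstar < t → t < tstar + τ → |g t| < c1 * Real.exp (-γ * t) := by
    intro t h1 h2
    set C := 2 * chat * Real.exp (-γ * tstar) with hC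
    have hbound : ∀ x ∈ Set.Icc tstar t, ‖g' x‖ ≤ C := by
      intro x hx
      calc ‖g' x‖ = |g' x| := rfl
        _ ≤ 2 * chat * Real.exp (-γ * x) := hg' x hx.1
        _ ≤ C := by
            apply mul_le_mul_of_nonneg_left _ (by positivity)
            exact Real.exp_le_exp.2 (by nlinarith [hx.1])
    have hderiv : ∀ x ∈ Set.Icc tstar t, HasDerivWithinAt g (g' x) (Set.Icc tstar t) x :=
      fun x hx => (hg x hx.1).hasDerivWithinAt
    have hineq := (convex_Icc tstar t).norm_image_sub_le_of_norm_hasDerivWithin_le hderiv hbound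
      (Set.left_mem_Icc.2 h1.le) (Set.right_mem_Icc.2 h1.le)
    rw [hg0, sub_zero] at hineq
    have h3 : ‖t - tstar‖ = t - tstar := by
      rw [Real.norm_eq_abs, abs_of_pos (by linarith)]
    rw [h3] at hineq
    have hu : t - tstar < τ := by linarith
    have hstep : 2 * chat * (t - tstar) < c1 * Real.exp (-γ * (t - tstar)) := by
      calc 2 * chat * (t - tstar) < 2 * chat * τ := by nlinarith
        _ = c1 * Real.exp (-γ * τ) := hτeq
        _ < c1 * Real.exp (-γ * (t - tstar)) := by
            apply mul_lt_mul_of_pos_left _ hc1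
            exact Real.exp_lt_exp.2 (by nlinarith)
    have hfin : C * (t - tstar) < c1 * Real.exp (-γ * t) := by
      have hsplit : Real.exp (-γ * t) = Real.exp (-γ * tstar) * Real.exp (-γ * (t - tstar)) := by
        rw [← Real.exp_add]; ring_nf
      rw [hsplit]
      have hE : 0 < Real.exp (-γ * tstar) := Real.exp_pos _
      calc C * (t - tstar) = Real.exp (-γ * tstar) * (2 * chat * (t - tstar)) := by
            rw [hC]; ring
        _ < Real.exp (-γ * tstar) * (c1 * Real.exp (-γ * (t - tstar))) :=
            mul_lt_mul_of_pos_left hstep hE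
        _ = c1 * (Real.exp (-γ * tstar) * Real.exp (-γ * (t - tstar))) := by ring
    calc |g t| = ‖g t‖ := rfl
      _ ≤ C * (t - tstar) := hineq
      _ < _ := hfin
  refine ⟨key, ?_⟩
  intro T hT hge
  by_contra h
  push_neg at h
  exact absurd hge (not_le.2 (key T hT h))
end

section
/- Let A ∈ ℝ^{n×n}, B ∈ ℝ^{n×1}, C ∈ ℝ^{1×n}, and let (X, U) ∈ ℝ^{n×1} × ℝ solve the regulator equations A·X + B·U = 0 and C·X = 1. Let K₁ ∈ ℝ^{1×n}, set K₂ = U − K₁·X and Â = A + B·K₁, and let P ∈ ℝ^{n×n} be symmetric positive definite with Âᵀ·P + P·Â = −2·I_n, with λ_P the largest eigenvalue of P. Let 0 < γ < min{1, 1/(2λ_P)} and let y* ∈ ℝ. Suppose x : [0,∞) → ℝ^n and z : [0,∞) → ℝ are continuously differentiable and u : [0,∞) → ℝ satisfies, for all t ≥ 0: ẋ(t) = A·x(t) + B·u(t), u(t) = K₁·x(t) + K₂·z(t) + ū(t), with |ū(t)| ≤ c₁·e^{−γt}, |z(t) − y*| ≤ k·e^{−γ̃t}, and |ż(t)| ≤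 k'·e^{−γ̃t} for constants c₁, k, k' ≥ 0 and γ̃ > γ. Then the output y(t) = C·x(t) converges to y* exponentially: there exists K ≥ 0 such that |y(t) − y*| ≤ K·(e^{−t/(2λ_P)} + e^{−γt}) for all t ≥ 0. -/
/-! With `w = x - z X` the regulator equations turn the closed loop into `ẇ = Âw + g`, where
`g = ū B - ż X` decays like `e^{-γt}`. Along this system the Lyapunov function `V = wᵀPw`
satisfies `V̇ = -2|w|² + 2wᵀPg ≤ -|w|² + |Pg|² ≤ -V/λ_P + c e^{-2γt}` (Young's inequality and
`V ≤ λ_P |w|²`), so, as `2γ < 1/λ_P`, comparison gives `V(t) ≤ V(0) e^{-t/λ_P} + M e^{-2γt}`.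
Finally `y - y* = Cw + (z - y*)`, and `|Cw|² ≤ κ V` because `P` is positive definite. -/

open Matrix MatrixOrder Real

section DotProduct

variable {ι R : Type*} [Fintype ι] [CommRing R] [LinearOrder R] [IsStrictOrderedRing R]

theorem dotProduct_self_nonneg (v : ι → R) : 0 ≤ v ⬝ᵥ v :=
  Finset.sum_nonneg fun i _ => mul_self_nonneg (v i)

theorem two_mul_dotProduct_le (v w : ι → R) : 2 * (v ⬝ᵥ w) ≤ v ⬝ᵥ v + w ⬝ᵥ w := by
  have := dotProduct_self_nonneg (v - w)
  simp only [sub_dotProduct, dotProduct_sub, dotProduct_comm w v] at this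
  linarith

theorem sq_dotProduct_le (v w : ι → R) : (v ⬝ᵥ w) ^ 2 ≤ (v ⬝ᵥ v) * (w ⬝ᵥ w) := by
  simpa [dotProduct, sq] using Finset.sum_mul_sq_le_sq_mul_sq Finset.univ v w

theorem dotProduct_self_smul_sub_smul_le (a b : R) (p q : ι → R) :
    (a • p - b • q) ⬝ᵥ (a • p - b • q) ≤ 2 * a ^ 2 * (p ⬝ᵥ p) + 2 * b ^ 2 * (q ⬝ᵥ q) := by
  have := dotProduct_self_nonneg (a • p + b • q)
  simp only [add_dotProduct, dotProduct_add, sub_dotProduct, dotProduct_sub, smul_dotProduct,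
    dotProduct_smul, smul_eq_mul, dotProduct_comm q p] at this ⊢
  nlinarith

end DotProduct

theorem dotProduct_mulVec_comm_of_transpose_eq {ι R : Type*} [Fintype ι] [CommSemiring R]
    {P : Matrix ι ι R} (hP : Pᵀ = P) (v w : ι → R) : v ⬝ᵥ (P *ᵥ w) = w ⬝ᵥ (P *ᵥ v) := by
  rw [dotProduct_mulVec, ← mulVec_transpose, hP, dotProduct_comm]

section Spectrum

variable {ι : Type*} [Fintype ι] [DecidableEq ι] {P : Matrix ι ι ℝ}

theorem Matrix.IsHermitian.dotProduct_mulVec_le_of_eigenvalues_le (hP : P.IsHermitian) {c : ℝ}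
    (h : ∀ i, hP.eigenvalues i ≤ c) (v : ι → ℝ) : v ⬝ᵥ (P *ᵥ v) ≤ c * (v ⬝ᵥ v) := by
  have hle : P ≤ algebraMap ℝ _ c := by
    rw [le_algebraMap_iff_spectrum_le (ha := hP.isSelfAdjoint),
      hP.spectrum_real_eq_range_eigenvalues]
    rintro _ ⟨i, rfl⟩
    exact h i
  simpa [sub_mulVec, Algebra.algebraMap_eq_smul_one, smul_mulVec, dotProduct_sub] using
    (le_iff.1 hle).dotProduct_mulVec_nonneg v

theorem Matrix.IsHermitian.le_dotProduct_mulVec_of_le_eigenvalues (hP : P.IsHermitian) {c : ℝ}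
    (h : ∀ i, c ≤ hP.eigenvalues i) (v : ι → ℝ) : c * (v ⬝ᵥ v) ≤ v ⬝ᵥ (P *ᵥ v) := by
  have hle : algebraMap ℝ _ c ≤ P := by
    rw [algebraMap_le_iff_le_spectrum (ha := hP.isSelfAdjoint),
      hP.spectrum_real_eq_range_eigenvalues]
    rintro _ ⟨i, rfl⟩
    exact h i
  simpa [sub_mulVec, Algebra.algebraMap_eq_smul_one, smul_mulVec, dotProduct_sub] using
    (le_iff.1 hle).dotProduct_mulVec_nonneg v

theorem Matrix.PosDef.exists_pos_mul_dotProduct_le (hP : P.PosDef) :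
    ∃ μ > 0, ∀ v : ι → ℝ, μ * (v ⬝ᵥ v) ≤ v ⬝ᵥ (P *ᵥ v) := by
  obtain ⟨μ, hμ, hle⟩ : ∃ μ > 0, ∀ i, μ ≤ hP.1.eigenvalues i := by
    cases isEmpty_or_nonempty ι
    · exact ⟨1, one_pos, isEmptyElim⟩
    · obtain ⟨i, hi⟩ := Finite.exists_min hP.1.eigenvalues
      exact ⟨_, hP.eigenvalues_pos i, hi⟩
  exact ⟨μ, hμ, hP.1.le_dotProduct_mulVec_of_le_eigenvalues hle⟩

theorem Matrix.PosDef.exists_sq_dotProduct_le (hP : P.PosDef) (C : ι → ℝ) :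
    ∃ κ ≥ 0, ∀ v : ι → ℝ, (C ⬝ᵥ v) ^ 2 ≤ κ * (v ⬝ᵥ (P *ᵥ v)) := by
  obtain ⟨μ, hμ, hPμ⟩ := hP.exists_pos_mul_dotProduct_le
  have hκ : 0 ≤ (C ⬝ᵥ C) / μ := div_nonneg (dotProduct_self_nonneg C) hμ.le
  refine ⟨(C ⬝ᵥ C) / μ, hκ, fun v => ?_⟩
  calc (C ⬝ᵥ v) ^ 2 ≤ (C ⬝ᵥ C) * (v ⬝ᵥ v) := sq_dotProduct_le C v
    _ = (C ⬝ᵥ C) / μ * (μ * (v ⬝ᵥ v)) := by field_simp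
    _ ≤ (C ⬝ᵥ C) / μ * (v ⬝ᵥ (P *ᵥ v)) := mul_le_mul_of_nonneg_left (hPμ v) hκ

end Spectrum

section Derivatives

variable {𝕜 ι : Type*} [NontriviallyNormedField 𝕜] [Fintype ι]

theorem HasDerivAt.dotProduct {f g : 𝕜 → ι → 𝕜} {f' g' : ι → 𝕜} {t : 𝕜}
    (hf : HasDerivAt f f' t) (hg : HasDerivAt g g' t) :
    HasDerivAt (fun s => f s ⬝ᵥ g s) (f' ⬝ᵥ g t + f t ⬝ᵥ g') t := by
  simp only [_root_.dotProduct, ← Finset.sum_add_distrib]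
  exact HasDerivAt.fun_sum fun i _ => (hasDerivAt_pi.1 hf i).mul (hasDerivAt_pi.1 hg i)

theorem HasDerivAt.mulVec (M : Matrix ι ι 𝕜) {f : 𝕜 → ι → 𝕜} {f' : ι → 𝕜} {t : 𝕜}
    (hf : HasDerivAt f f' t) : HasDerivAt (fun s => M *ᵥ f s) (M *ᵥ f') t :=
  hasDerivAt_pi.2 fun i => (hasDerivAt_const t (M i)).dotProduct hf
    |>.congr_deriv (by rw [zero_dotProduct, zero_add]; rfl)

end Derivatives

theorem sq_le_sq_mul_exp_sq_of_abs_le {y c a b t : ℝ} (hy : |y| ≤ c * exp (-a * t)) (hba : b ≤ a)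
    (ht : 0 ≤ t) : y ^ 2 ≤ c ^ 2 * exp (-b * t) ^ 2 := calc
  y ^ 2 = |y| ^ 2 := (sq_abs y).symm
  _ ≤ (c * exp (-a * t)) ^ 2 := pow_le_pow_left₀ (abs_nonneg y) hy 2
  _ ≤ c ^ 2 * exp (-b * t) ^ 2 := by
    rw [mul_pow]
    gcongr

theorem abs_le_mul_add_of_sq_le {y p q e₁ e₂ : ℝ} (hp : 0 ≤ p) (hq : 0 ≤ q) (he₁ : 0 ≤ e₁)
    (he₂ : 0 ≤ e₂) (h : y ^ 2 ≤ p * e₁ ^ 2 + q * e₂ ^ 2) : |y| ≤ (√p + √q) * (e₁ + e₂) := by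
  have hp' := sq_sqrt hp
  have hq' := sq_sqrt hq
  have h₁ : 0 ≤ √p * e₁ := by positivity
  have h₂ : 0 ≤ √q * e₂ := by positivity
  refine abs_le_of_sq_le_sq ?_ (by positivity)
  calc y ^ 2 ≤ (√p * e₁ + √q * e₂) ^ 2 := by nlinarith [mul_nonneg h₁ h₂]
    _ ≤ ((√p + √q) * (e₁ + e₂)) ^ 2 := by
      gcongr
      nlinarith [mul_nonneg (sqrt_nonneg p) he₂, mul_nonneg (sqrt_nonneg q) he₁]

theorem le_exp_add_exp_of_hasDerivAt_le {V V' : ℝ → ℝ} {a b c : ℝ} (hba : b < a) (hc : 0 ≤ c)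
    (hV : ∀ t, 0 ≤ t → HasDerivAt V (V' t) t)
    (hV' : ∀ t, 0 ≤ t → V' t ≤ -a * V t + c * exp (-b * t)) {t : ℝ} (ht : 0 ≤ t) :
    V t ≤ V 0 * exp (-a * t) + c / (a - b) * exp (-b * t) := by
  set M := c / (a - b)
  have hM : (a - b) * M = c := mul_div_cancel₀ c (sub_pos.2 hba).ne'
  -- `V - M e^{-bt}` absorbs the forcing term and obeys the homogeneous inequality `f' ≤ -a f`.
  set f := fun s => V s - M * exp (-b * s)
  have hf : ∀ s, 0 ≤ s → HasDerivAt f (V' s + b * M * exp (-b * s)) s := fun s hs =>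
    ((hV s hs).sub (((hasDerivAt_id s).const_mul (-b)).exp.const_mul M)).congr_deriv (by
      simp only [id]; ring)
  have hgron := le_gronwallBound_of_liminf_deriv_right_le (δ := V 0 - M) (K := -a) (ε := 0)
    (fun s hs => (hf s hs.1).continuousAt.continuousWithinAt)
    (fun s hs _ hr => (hf s hs.1).hasDerivWithinAt.liminf_right_slope_le hr) (by simp [f])
    (fun s hs => by linear_combination hV' s hs.1 - exp (-b * s) * hM) t ⟨ht, le_rfl⟩
  rw [gronwallBound_ε0, sub_zero] at hgron
  have : 0 ≤ M * exp (-a * t) := mul_nonneg (div_nonneg hc (sub_pos.2 hba).le) (exp_pos _).le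
  simp only [f] at hgron
  linarith

theorem smul_sub_smul_dotProduct_self_le_of_abs_le {ι : Type*} [Fintype ι] {p q : ι → ℝ}
    {a b c₁ c₂ γ γ' t : ℝ} (ha : |a| ≤ c₁ * exp (-γ * t)) (hb : |b| ≤ c₂ * exp (-γ' * t))
    (hγ : γ ≤ γ') (ht : 0 ≤ t) :
    (a • p - b • q) ⬝ᵥ (a • p - b • q) ≤
      (2 * c₁ ^ 2 * (p ⬝ᵥ p) + 2 * c₂ ^ 2 * (q ⬝ᵥ q)) * exp (-(2 * γ) * t) := by
  have hexp : exp (-(2 * γ) * t) = exp (-γ * t) ^ 2 := by rw [sq, ← exp_add]; ring_nf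
  have ha' := sq_le_sq_mul_exp_sq_of_abs_le ha le_rfl ht
  have hb' := sq_le_sq_mul_exp_sq_of_abs_le hb hγ ht
  have hp := dotProduct_self_nonneg p
  have hq := dotProduct_self_nonneg q
  rw [hexp]
  refine (dotProduct_self_smul_sub_smul_le a b p q).trans ?_
  nlinarith

section Lyapunov

variable {ι : Type*} [Fintype ι] [DecidableEq ι] {Ahat P : Matrix ι ι ℝ}

theorem dotProduct_mulVec_mulVec_eq_neg_of_lyapunov (hP : Pᵀ = P)
    (hlyap : Ahatᵀ * P + P * Ahat = (-2 : ℝ) • (1 : Matrix ι ι ℝ)) (w : ι → ℝ) :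
    w ⬝ᵥ (P *ᵥ (Ahat *ᵥ w)) = -(w ⬝ᵥ w) := by
  have h := congrArg (fun M => w ⬝ᵥ (M *ᵥ w)) hlyap
  have hsymm : w ⬝ᵥ (Ahatᵀ *ᵥ (P *ᵥ w)) = w ⬝ᵥ (P *ᵥ (Ahat *ᵥ w)) := by
    rw [dotProduct_mulVec, vecMul_transpose]
    exact dotProduct_mulVec_comm_of_transpose_eq hP _ _
  simp only [add_mulVec, dotProduct_add, ← mulVec_mulVec, hsymm, smul_mulVec, one_mulVec,
    dotProduct_smul, smul_eq_mul] at h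
  linarith

theorem lyapunov_deriv_le (hP : P.IsHermitian)
    (hlyap : Ahatᵀ * P + P * Ahat = (-2 : ℝ) • (1 : Matrix ι ι ℝ)) {lam : ℝ} (hlam_pos : 0 < lam)
    (hlam : ∀ i, hP.eigenvalues i ≤ lam) (w g : ι → ℝ) :
    (Ahat *ᵥ w + g) ⬝ᵥ (P *ᵥ w) + w ⬝ᵥ (P *ᵥ (Ahat *ᵥ w + g)) ≤
      -lam⁻¹ * (w ⬝ᵥ (P *ᵥ w)) + (P *ᵥ g) ⬝ᵥ (P *ᵥ g) := by
  have hPt : Pᵀ = P := hP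
  have hAhat := dotProduct_mulVec_mulVec_eq_neg_of_lyapunov hPt hlyap w
  have hyoung := two_mul_dotProduct_le w (P *ᵥ g)
  have hV : lam⁻¹ * (w ⬝ᵥ (P *ᵥ w)) ≤ w ⬝ᵥ w :=
    (inv_mul_le_iff₀ hlam_pos).2 (hP.dotProduct_mulVec_le_of_eigenvalues_le hlam w)
  rw [dotProduct_mulVec_comm_of_transpose_eq hPt, mulVec_add, dotProduct_add, hAhat]
  linarith

theorem dotProduct_mulVec_le_of_lyapunov (hP : P.IsHermitian)
    (hlyap : Ahatᵀ * P + P * Ahat = (-2 : ℝ) • (1 : Matrix ι ι ℝ)) {lam : ℝ} (hlam_pos : 0 < lam)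
    (hlam : ∀ i, hP.eigenvalues i ≤ lam) {w g : ℝ → ι → ℝ}
    (hw : ∀ t, 0 ≤ t → HasDerivAt w (Ahat *ᵥ w t + g t) t) {b c : ℝ} (hb : b < lam⁻¹)
    (hc : 0 ≤ c) (hg : ∀ t, 0 ≤ t → (P *ᵥ g t) ⬝ᵥ (P *ᵥ g t) ≤ c * exp (-b * t)) {t : ℝ}
    (ht : 0 ≤ t) :
    w t ⬝ᵥ (P *ᵥ w t) ≤
      w 0 ⬝ᵥ (P *ᵥ w 0) * exp (-lam⁻¹ * t) + c / (lam⁻¹ - b) * exp (-b * t) :=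
  le_exp_add_exp_of_hasDerivAt_le hb hc (fun s hs => (hw s hs).dotProduct ((hw s hs).mulVec P))
    (fun s hs => (lyapunov_deriv_le hP hlyap hlam_pos hlam (w s) (g s)).trans
      (add_le_add le_rfl (hg s hs))) ht

theorem Matrix.PosDef.exists_abs_dotProduct_le_of_lyapunov (hP : P.PosDef)
    (hlyap : Ahatᵀ * P + P * Ahat = (-2 : ℝ) • (1 : Matrix ι ι ℝ)) {lam : ℝ} (hlam_pos : 0 < lam)
    (hlam : ∀ i, hP.1.eigenvalues i ≤ lam) {w g : ℝ → ι → ℝ}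
    (hw : ∀ t, 0 ≤ t → HasDerivAt w (Ahat *ᵥ w t + g t) t) {γ c : ℝ} (hγ : 2 * γ < lam⁻¹)
    (hc : 0 ≤ c) (hg : ∀ t, 0 ≤ t → (P *ᵥ g t) ⬝ᵥ (P *ᵥ g t) ≤ c * exp (-(2 * γ) * t))
    (C : ι → ℝ) :
    ∃ K ≥ 0, ∀ t, 0 ≤ t → |C ⬝ᵥ w t| ≤ K * (exp (-t / (2 * lam)) + exp (-γ * t)) := by
  obtain ⟨κ, hκ, hCκ⟩ := hP.exists_sq_dotProduct_le C
  set p := κ * (w 0 ⬝ᵥ (P *ᵥ w 0))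
  set q := κ * (c / (lam⁻¹ - 2 * γ))
  have hp : 0 ≤ p := mul_nonneg hκ (hP.posSemidef.dotProduct_mulVec_nonneg (w 0))
  have hq : 0 ≤ q := mul_nonneg hκ (div_nonneg hc (sub_pos.2 hγ).le)
  refine ⟨√p + √q, by positivity, fun t ht => ?_⟩
  refine abs_le_mul_add_of_sq_le hp hq (exp_pos _).le (exp_pos _).le ?_
  calc (C ⬝ᵥ w t) ^ 2 ≤ κ * (w t ⬝ᵥ (P *ᵥ w t)) := hCκ (w t)
    _ ≤ κ * (w 0 ⬝ᵥ (P *ᵥ w 0) * exp (-lam⁻¹ * t) +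
          c / (lam⁻¹ - 2 * γ) * exp (-(2 * γ) * t)) :=
      mul_le_mul_of_nonneg_left
        (dotProduct_mulVec_le_of_lyapunov hP.1 hlyap hlam_pos hlam hw hγ hc hg ht) hκ
    _ = p * exp (-t / (2 * lam)) ^ 2 + q * exp (-γ * t) ^ 2 := by
      simp only [p, q, sq, ← exp_add]
      ring_nf

end Lyapunov

theorem hasDerivAt_sub_smul_of_regulator {ι : Type*} [Fintype ι] {A : Matrix ι ι ℝ}
    {B X K : ι → ℝ} {U : ℝ} (hreg : A *ᵥ X + U • B = 0) {x : ℝ → ι → ℝ} {z : ℝ → ℝ}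
    {z' e t : ℝ} (hx : HasDerivAt x (A *ᵥ x t + (K ⬝ᵥ x t + (U - K ⬝ᵥ X) * z t + e) • B) t)
    (hz : HasDerivAt z z' t) :
    HasDerivAt (fun s => x s - z s • X)
      ((A + vecMulVec B K) *ᵥ (x t - z t • X) + (e • B - z' • X)) t := by
  refine (hx.sub (hz.smul_const X)).congr_deriv ?_
  have hAX : A *ᵥ X = -(U • B) := eq_neg_of_add_eq_zero_left hreg
  rw [add_mulVec, vecMulVec_mulVec, mulVec_sub, mulVec_smul, hAX]
  ext i
  simp only [dotProduct_sub, dotProduct_smul, smul_eq_mul, Pi.add_apply, Pi.sub_apply,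
    Pi.smul_apply, Pi.neg_apply, MulOpposite.smul_eq_mul_unop, MulOpposite.unop_op]
  ring

theorem stmt_17_general (n : ℕ) (A : Matrix (Fin n) (Fin n) ℝ) (B C X : Fin n → ℝ) (U : ℝ)
    (hreg1 : A *ᵥ X + U • B = 0) (hreg2 : C ⬝ᵥ X = 1)
    (K1 : Fin n → ℝ) (K2 : ℝ) (hK2 : K2 = U - K1 ⬝ᵥ X)
    (Ahat : Matrix (Fin n) (Fin n) ℝ) (hAhat : Ahat = A + Matrix.vecMulVec B K1)
    (P : Matrix (Fin n) (Fin n) ℝ) (hP : P.PosDef)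
    (hlyap : Ahatᵀ * P + P * Ahat = (-2 : ℝ) • (1 : Matrix (Fin n) (Fin n) ℝ))
    (lamP : ℝ) (hlamP : IsGreatest (Set.range hP.1.eigenvalues) lamP)
    (γ γtil ystar c1 k k' : ℝ)
    (hγ2 : γ < 1 / (2 * lamP)) (hγtil : γ < γtil)
    (hk : 0 ≤ k)
    (x : ℝ → Fin n → ℝ) (z z' u ubar : ℝ → ℝ)
    (hx : ∀ t, 0 ≤ t → HasDerivAt x (A *ᵥ x t + u t • B) t)
    (hz : ∀ t, 0 ≤ t → HasDerivAt z (z' t) t)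
    (hu : ∀ t, 0 ≤ t → u t = K1 ⬝ᵥ x t + K2 * z t + ubar t)
    (hubar : ∀ t, 0 ≤ t → |ubar t| ≤ c1 * Real.exp (-γ * t))
    (hzb : ∀ t, 0 ≤ t → |z t - ystar| ≤ k * Real.exp (-γtil * t))
    (hz'b : ∀ t, 0 ≤ t → |z' t| ≤ k' * Real.exp (-γtil * t)) :
    ∃ K : ℝ, 0 ≤ K ∧ ∀ t, 0 ≤ t →
      |C ⬝ᵥ x t - ystar| ≤ K * (Real.exp (-t / (2 * lamP)) + Real.exp (-γ * t)) := by
  have hlam_pos : 0 < lamP := by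
    obtain ⟨i, rfl⟩ := hlamP.1
    exact hP.eigenvalues_pos i
  set w := fun s => x s - z s • X
  have hw : ∀ t, 0 ≤ t → HasDerivAt w (Ahat *ᵥ w t + (ubar t • B - z' t • X)) t := by
    intro t ht
    subst hAhat hK2
    exact hasDerivAt_sub_smul_of_regulator hreg1 (hu t ht ▸ hx t ht) (hz t ht)
  set c := 2 * c1 ^ 2 * ((P *ᵥ B) ⬝ᵥ (P *ᵥ B)) + 2 * k' ^ 2 * ((P *ᵥ X) ⬝ᵥ (P *ᵥ X))
  have hc : 0 ≤ c := by
    have := dotProduct_self_nonneg (P *ᵥ B)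
    have := dotProduct_self_nonneg (P *ᵥ X)
    positivity
  have hg : ∀ t, 0 ≤ t → (P *ᵥ (ubar t • B - z' t • X)) ⬝ᵥ (P *ᵥ (ubar t • B - z' t • X)) ≤
      c * exp (-(2 * γ) * t) := fun t ht => by
    rw [mulVec_sub, mulVec_smul, mulVec_smul]
    exact smul_sub_smul_dotProduct_self_le_of_abs_le (hubar t ht) (hz'b t ht) hγtil.le ht
  have hγ : 2 * γ < lamP⁻¹ := by
    rw [one_div, mul_inv] at hγ2
    linarith
  obtain ⟨K, hK, hCw⟩ := hP.exists_abs_dotProduct_le_of_lyapunov hlyap hlam_pos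
    (fun i => hlamP.2 ⟨i, rfl⟩) hw hγ hc hg C
  refine ⟨K + k, add_nonneg hK hk, fun t ht => ?_⟩
  have hy : C ⬝ᵥ x t - ystar = C ⬝ᵥ w t + (z t - ystar) := by
    simp only [w, dotProduct_sub, dotProduct_smul, hreg2, smul_eq_mul]
    ring
  have hzt : |z t - ystar| ≤ k * (exp (-t / (2 * lamP)) + exp (-γ * t)) := by
    refine (hzb t ht).trans (mul_le_mul_of_nonneg_left ?_ hk)
    have : exp (-γtil * t) ≤ exp (-γ * t) := exp_le_exp.2 (by nlinarith)
    linarith [exp_pos (-t / (2 * lamP))]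
  rw [hy]
  linarith [abs_add_le (C ⬝ᵥ w t) (z t - ystar), hCw t ht]

/-- per-agent core of Theorem 1, item c: the agent `ẋ = Ax + Bu`,
`y = Cx` driven by `u = K₁x + K₂z + ū` with exponentially decaying triggering error
`ū` and exponentially converging generator state `z → y*` (with exponentially decaying
derivative) has output `y(t) = Cx(t)` converging exponentially to `y*`:
`|y(t) − y*| ≤ K(e^{−t/(2λ_P)} + e^{−γt})`. Here `(X, U)` solves the regulator
equations, `K₂ = U − K₁X`, `Â = A + BK₁`, and `P ≻ 0` solves `ÂᵀP + PÂ = −2Iₙ`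
with largest eigenvalue `λ_P`. -/
theorem stmt_17 (n : ℕ) (A : Matrix (Fin n) (Fin n) ℝ) (B C X : Fin n → ℝ) (U : ℝ)
    (hreg1 : A *ᵥ X + U • B = 0) (hreg2 : C ⬝ᵥ X = 1)
    (K1 : Fin n → ℝ) (K2 : ℝ) (hK2 : K2 = U - K1 ⬝ᵥ X)
    (Ahat : Matrix (Fin n) (Fin n) ℝ) (hAhat : Ahat = A + Matrix.vecMulVec B K1)
    (P : Matrix (Fin n) (Fin n) ℝ) (hP : P.PosDef)
    (hlyap : Ahatᵀ * P + P * Ahat = (-2 : ℝ) • (1 : Matrix (Fin n) (Fin n) ℝ))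
    (lamP : ℝ) (hlamP : IsGreatest (Set.range hP.1.eigenvalues) lamP)
    (γ γtil ystar c1 k k' : ℝ)
    (hγ0 : 0 < γ) (hγ1 : γ < 1) (hγ2 : γ < 1 / (2 * lamP)) (hγtil : γ < γtil)
    (hc1 : 0 ≤ c1) (hk : 0 ≤ k) (hk' : 0 ≤ k')
    (x : ℝ → Fin n → ℝ) (z z' u ubar : ℝ → ℝ)
    (hx : ∀ t, 0 ≤ t → HasDerivAt x (A *ᵥ x t + u t • B) t)
    (hz : ∀ t, 0 ≤ t → HasDerivAt z (z' t) t)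
    (hu : ∀ t, 0 ≤ t → u t = K1 ⬝ᵥ x t + K2 * z t + ubar t)
    (hubar : ∀ t, 0 ≤ t → |ubar t| ≤ c1 * Real.exp (-γ * t))
    (hzb : ∀ t, 0 ≤ t → |z t - ystar| ≤ k * Real.exp (-γtil * t))
    (hz'b : ∀ t, 0 ≤ t → |z' t| ≤ k' * Real.exp (-γtil * t)) :
    ∃ K : ℝ, 0 ≤ K ∧ ∀ t, 0 ≤ t →
      |C ⬝ᵥ x t - ystar| ≤ K * (Real.exp (-t / (2 * lamP)) + Real.exp (-γ * t)) :=
  stmt_17_general n A B C X U hreg1 hreg2 K1 K2 hK2 Ahat hAhat P hP hlyap lamP hlamP γ γtil ystar c1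
    k k' hγ2 hγtil hk x z z' u ubar hx hz hu hubar hzb hz'b
end
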